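/- If there exists a nonzero-equilibrium pseudo-flow (an equilibrium pseudo-flow with h(f_a) > 0 for some arc a), then the multi-commodity flow problem has no feasible solution. -/
import Mathlib


open Finset

/-- `IsPath tail head p s t` : the list of arcs `p` forms a path from `s` to `t`. -/
def IsPath {V A : Type*} (tail head : A → V) : List A → V → V → Prop
  | [], s, t => s = t
  | a :: p, s, t => tail a = s ∧ IsPath tail head p (head a) t

/-- Flow conservation. -/
def Conserves {V A : Type*} [Fintype A] [DecidableEq V]
    (tail head : A → V) (s t : V) (d : ℝ) (g : A → ℝ) : Prop :=
  ∀ i : V,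
    (∑ a ∈ Finset.univ.filter fun a => tail a = i, g a)
      - (∑ a ∈ Finset.univ.filter fun a => head a = i, g a)
      = if i = s then d else if i = t then -d else 0


lemma isPath_append {V A : Type*} (tail head : A → V) (p : List A) (a : A) :
    ∀ s v, IsPath tail head p s v → tail a = v →
      IsPath tail head (p ++ [a]) s (head a) := by
  induction p with
  | nil =>
      intro s v h ht
      exact ⟨ht.trans (show v = s from h.symm), rfl⟩
  | cons b q ih =>
      intro s v h ht
      exact ⟨h.1, ih _ _ h.2 ht⟩

lemma map_sum_count {A : Type*} [Fintype A] [DecidableEq A] (w : A → ℝ) (p : List A) :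
    (p.map w).sum = ∑ a, (p.count a : ℝ) * w a := by
  rw [Finset.sum_list_map_count]
  rw [← Finset.sum_subset (Finset.subset_univ p.toFinset)]
  · exact Finset.sum_congr rfl fun a _ => by simp [nsmul_eq_mul]
  · intro a _ ha
    simp [List.count_eq_zero_of_not_mem (by simpa using ha)]

lemma fiber_sum {V A : Type*} [Fintype V] [Fintype A] [DecidableEq V]
    (m : A → V) (g : A → ℝ) (π : V → ℝ) :
    ∑ a, g a * π (m a) = ∑ v, π v * ∑ a ∈ Finset.univ.filter (fun a => m a = v), g a := by
  rw [← Finset.sum_fiberwise Finset.univ m (fun a => g a * π (m a))]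
  refine Finset.sum_congr rfl fun v _ => ?_
  rw [Finset.mul_sum]
  refine Finset.sum_congr rfl fun a ha => ?_
  rw [(Finset.mem_filter.mp ha).2]; ring

lemma potential_bound {V A : Type*} [Fintype V] [Fintype A] [DecidableEq V]
    (tail head : A → V) (s t : V) (d : ℝ) (hd : d ≠ 0) (g : A → ℝ) (π : V → ℝ) (w : A → ℝ)
    (hg : ∀ a, 0 ≤ g a) (hc : Conserves tail head s t d g)
    (hπ : ∀ a, π (head a) - π (tail a) ≤ w a) :
    d * (π t - π s) ≤ ∑ a, w a * g a := by
  have key : ∑ v, π v * ((∑ a ∈ Finset.univ.filter fun a => tail a = v, g a)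
      - (∑ a ∈ Finset.univ.filter fun a => head a = v, g a))
      = ∑ v, π v * (if v = s then d else if v = t then -d else 0) :=
    Finset.sum_congr rfl fun v _ => by rw [hc v]
  by_cases hst : s = t
  · exfalso
    have hsum0 : ∑ v, ((∑ a ∈ Finset.univ.filter fun a => tail a = v, g a)
        - (∑ a ∈ Finset.univ.filter fun a => head a = v, g a)) = 0 := by
      rw [Finset.sum_sub_distrib, Finset.sum_fiberwise, Finset.sum_fiberwise, sub_self]
    have hsum1 : ∑ v, ((∑ a ∈ Finset.univ.filter fun a => tail a = v, g a)
        - (∑ a ∈ Finset.univ.filter fun a => head a = v, g a))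
        = ∑ v, (if v = s then d else if v = t then -d else 0) :=
      Finset.sum_congr rfl fun v _ => hc v
    have : ∑ v, (if v = s then d else if v = t then -d else 0) = d := by
      subst hst
      rw [Finset.sum_congr rfl (fun v _ => show _ = (if v = s then d else 0) from by
        by_cases h : v = s <;> simp [h])]
      simp [Finset.sum_ite_eq']
    exact hd (by linarith [hsum0, hsum1.symm.trans hsum0, this])
  · have hlhs : ∑ v, π v * ((∑ a ∈ Finset.univ.filter fun a => tail a = v, g a)
        - (∑ a ∈ Finset.univ.filter fun a => head a = v, g a))
        = ∑ a, g a * π (tail a) - ∑ a, g a * π (head a) := by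
      rw [fiber_sum tail g π, fiber_sum head g π, ← Finset.sum_sub_distrib]
      exact Finset.sum_congr rfl fun v _ => by ring
    have hrhs : ∑ v, π v * (if v = s then d else if v = t then -d else 0)
        = π s * d - π t * d := by
      have : ∀ v, π v * (if v = s then d else if v = t then -d else 0)
          = (if v = s then π s * d else 0) + (if v = t then -(π t * d) else 0) := by
        intro v
        by_cases h1 : v = s
        · subst h1; simp [hst]
        · have hts : ¬ t = s := fun h => hst h.symm
          by_cases h2 : v = t <;> simp [h1, h2, hts]
      rw [Finset.sum_congr rfl fun v _ => this v, Finset.sum_add_distrib,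
        Finset.sum_ite_eq' Finset.univ s (fun _ => π s * d),
        Finset.sum_ite_eq' Finset.univ t (fun _ => -(π t * d))]
      simp; ring
    have heq : ∑ a, g a * (π (head a) - π (tail a)) = d * (π t - π s) := by
      have := key
      rw [hlhs, hrhs] at this
      have expand : ∑ a, g a * (π (head a) - π (tail a))
          = ∑ a, g a * π (head a) - ∑ a, g a * π (tail a) := by
        rw [← Finset.sum_sub_distrib]
        exact Finset.sum_congr rfl fun a _ => by ring
      rw [expand]; linarith
    calc d * (π t - π s) = ∑ a, g a * (π (head a) - π (tail a)) := heq.symm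
      _ ≤ ∑ a, w a * g a :=
        Finset.sum_le_sum fun a _ => by
          have := mul_le_mul_of_nonneg_left (hπ a) (hg a)
          linarith

/-- if there exists a nonzero-equilibrium pseudo-flow (an
equilibrium pseudo-flow with h(f_a) = max(f_a - u_a, 0) > 0 on some arc),
then the multi-commodity flow problem has no feasible solution. -/
theorem stmt9 {V A K : Type*} [Fintype V] [Fintype A] [Fintype K]
    [DecidableEq V] [DecidableEq A]
    (tail head : A → V) (u : A → ℝ) (s t : K → V) (d : K → ℝ)
    (f : K → A → ℝ) (Pk : K → Finset (List A)) (fp : K → List A → ℝ)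
    (L : K → ℝ) (w fa : A → ℝ)
    (hu : ∀ a, 0 ≤ u a) (hd : ∀ k, 0 < d k)
    (hf0 : ∀ k a, 0 ≤ f k a)
    (hcons : ∀ k, Conserves tail head (s k) (t k) (d k) (f k))
    (hfp : ∀ k p, 0 ≤ fp k p)
    (hpath : ∀ k, ∀ p ∈ Pk k, IsPath tail head p (s k) (t k))
    (hdec : ∀ k, ∑ p ∈ Pk k, fp k p = d k)
    (hfk : ∀ k a, f k a = ∑ p ∈ Pk k, (p.count a : ℝ) * fp k p)
    (hfa : ∀ a, fa a = ∑ k, f k a)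
    (hw : ∀ a, w a = max (fa a - u a) 0)
    (hused : ∀ k, ∀ p ∈ Pk k, 0 < fp k p → (p.map w).sum = L k)
    (hmin : ∀ k, ∀ p : List A, IsPath tail head p (s k) (t k) →
      L k ≤ (p.map w).sum)
    (hnz : ∃ a, u a < fa a) :
    ¬ ∃ g : K → A → ℝ, (∀ k a, 0 ≤ g k a)
        ∧ (∀ k, Conserves tail head (s k) (t k) (d k) (g k))
        ∧ (∀ a, (∑ k, g k a) ≤ u a) := by
  rintro ⟨g, hg0, hgc, hgu⟩
  have hw0 : ∀ a, 0 ≤ w a := fun a => (hw a) ▸ le_max_right _ 0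
  have hpsum0 : ∀ p : List A, 0 ≤ (p.map w).sum := by
    intro p
    refine List.sum_nonneg ?_
    intro x hx
    obtain ⟨a, _, rfl⟩ := List.mem_map.mp hx
    exact hw0 a
  have hL0 : ∀ k, 0 ≤ L k := by
    intro k
    obtain ⟨p, hp, hppos⟩ : ∃ p ∈ Pk k, 0 < fp k p := by
      by_contra h
      push_neg at h
      have hz : ∑ p ∈ Pk k, fp k p = 0 :=
        Finset.sum_eq_zero fun p hp => le_antisymm (h p hp) (hfp k p)
      rw [hdec k] at hz
      exact (hd k).ne' hz
    rw [← hused k p hp hppos]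
    exact hpsum0 p
  -- shortest path potentials
  set S : K → V → Set ℝ :=
    fun k v => {x : ℝ | (∃ p, IsPath tail head p (s k) v ∧ (p.map w).sum = x) ∨ x = L k}
    with hS
  set π : K → V → ℝ := fun k v => sInf (S k v) with hπ
  have hbdd : ∀ k v, BddBelow (S k v) := by
    intro k v
    refine ⟨0, fun x hx => ?_⟩
    rcases hx with ⟨p, _, rfl⟩ | rfl
    · exact hpsum0 p
    · exact hL0 k
  have hne : ∀ k v, (S k v).Nonempty := fun k v => ⟨L k, Or.inr rfl⟩
  have hπs : ∀ k, π k (s k) ≤ 0 := by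
    intro k
    exact csInf_le (hbdd _ _) (Or.inl ⟨[], rfl, rfl⟩)
  have hπt : ∀ k, L k ≤ π k (t k) := by
    intro k
    refine le_csInf (hne _ _) fun x hx => ?_
    rcases hx with ⟨p, hp, rfl⟩ | rfl
    · exact hmin k p hp
    · exact le_refl _
  have hπa : ∀ k a, π k (head a) - π k (tail a) ≤ w a := by
    intro k a
    have key : π k (head a) - w a ≤ π k (tail a) := by
      refine le_csInf (hne _ _) fun x hx => ?_
      rcases hx with ⟨p, hp, rfl⟩ | rfl
      · have hmem : ((p ++ [a]).map w).sum ∈ S k (head a) :=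
          Or.inl ⟨p ++ [a], isPath_append tail head p a _ _ hp rfl, rfl⟩
        have hle : π k (head a) ≤ ((p ++ [a]).map w).sum := csInf_le (hbdd _ _) hmem
        have hsum : ((p ++ [a]).map w).sum = (p.map w).sum + w a := by simp
        linarith
      · have : π k (head a) ≤ L k := csInf_le (hbdd _ _) (Or.inr rfl)
        linarith [hw0 a]
    linarith
  -- per-commodity lower bound for the feasible flow
  have hk : ∀ k, d k * L k ≤ ∑ a, w a * g k a := by
    intro k
    have hb := potential_bound tail head (s k) (t k) (d k) (hd k).ne' (g k) (π k) w
      (hg0 k) (hgc k) (hπa k)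
    have h2 : L k ≤ π k (t k) - π k (s k) := by linarith [hπt k, hπs k]
    calc d k * L k ≤ d k * (π k (t k) - π k (s k)) :=
          mul_le_mul_of_nonneg_left h2 (hd k).le
      _ ≤ _ := hb
  have hfeas : ∑ k, d k * L k ≤ ∑ a, w a * u a := by
    calc ∑ k, d k * L k ≤ ∑ k, ∑ a, w a * g k a := Finset.sum_le_sum fun k _ => hk k
      _ = ∑ a, ∑ k, w a * g k a := Finset.sum_comm
      _ = ∑ a, w a * ∑ k, g k a := by
          refine Finset.sum_congr rfl fun a _ => ?_
          rw [Finset.mul_sum]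
      _ ≤ ∑ a, w a * u a :=
          Finset.sum_le_sum fun a _ => mul_le_mul_of_nonneg_left (hgu a) (hw0 a)
  -- equilibrium identity
  have hkeq : ∀ k, d k * L k = ∑ a, w a * f k a := by
    intro k
    calc d k * L k = ∑ p ∈ Pk k, fp k p * L k := by rw [← Finset.sum_mul, hdec k]
      _ = ∑ p ∈ Pk k, fp k p * (p.map w).sum := by
          refine Finset.sum_congr rfl fun p hp => ?_
          rcases lt_or_eq_of_le (hfp k p) with h | h
          · rw [hused k p hp h]
          · rw [← h]; ring
      _ = ∑ p ∈ Pk k, fp k p * ∑ a, (p.count a : ℝ) * w a := by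
          simp_rw [map_sum_count]
      _ = ∑ a, w a * ∑ p ∈ Pk k, (p.count a : ℝ) * fp k p := by
          simp_rw [Finset.mul_sum]
          rw [Finset.sum_comm]
          refine Finset.sum_congr rfl fun a _ => Finset.sum_congr rfl fun p _ => by ring
      _ = ∑ a, w a * f k a := by
          refine Finset.sum_congr rfl fun a _ => ?_
          rw [← hfk k a]
  have heq : ∑ k, d k * L k = ∑ a, w a * fa a := by
    calc ∑ k, d k * L k = ∑ k, ∑ a, w a * f k a :=
          Finset.sum_congr rfl fun k _ => hkeq k
      _ = ∑ a, ∑ k, w a * f k a := Finset.sum_comm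
      _ = ∑ a, w a * fa a := by
          refine Finset.sum_congr rfl fun a _ => ?_
          rw [hfa a, Finset.mul_sum]
  -- strict inequality
  obtain ⟨a0, ha0⟩ := hnz
  have hstrict : ∑ a, w a * u a < ∑ a, w a * fa a := by
    refine Finset.sum_lt_sum (fun a _ => ?_) ⟨a0, Finset.mem_univ a0, ?_⟩
    · rcases le_or_gt (fa a) (u a) with h | h
      · have hwz : w a = 0 := by rw [hw a, max_eq_right (by linarith)]
        rw [hwz]; simp
      · exact mul_le_mul_of_nonneg_left h.le (hw0 a)
    · have hwpos : 0 < w a0 := by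
        rw [hw a0]
        exact lt_max_of_lt_left (by linarith)
      exact mul_lt_mul_of_pos_left ha0 hwpos
  linarith
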